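/- (Localizing the energy.) Assume the N×d real matrix Φ satisfies the Restricted Isometry Condition with parameters (2n, ε), where 0 < ε ≤ 0.03. Let v ∈ ℝ^d be n-sparse and let I ⊆ {1,…,d} satisfy |supp(v) ∪ I| ≤ 2n. Set x = Φv, F = range(Φ_I), r = P_{F^⊥} x, v₀ = v|_{supp(v)∖I}, and u = Φ*r. Let J ⊆ {1,…,d} be a set of biggest coordinates of u, i.e. J ⊆ supp(u), |u(i)| ≥ |u(j)| for all i ∈ J and j ∉ J, and |J| = min(n, |supp(u)|). Then ‖u|_J‖₂ ≥ 0.8 ‖v₀‖₂. -/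

import Mathlib

/-!
The residual `r` is orthogonal to `F` and `x - r ∈ F`, so `r = Φ (v - w)` with `supp w ⊆ I`.
The vector `v - w` is `2n`-sparse and agrees with `v₀` off `I`, so the RIC gives
`‖r‖ ≥ (1 - ε) ‖v₀‖`. On the other hand `Φ (v - v₀) ∈ F`, hence
`‖r‖² = ⟪r, Φ v⟫ = ⟪r, Φ v₀⟫ = ⟪u, v₀⟫`, and Cauchy–Schwarz on `supp v₀`, a set of at most `n`
coordinates, bounds this by `‖u|_J‖ ‖v₀‖`. Thus `(1 - ε)² ‖v₀‖ ≤ ‖u|_J‖`, and `0.97² ≥ 0.8`.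
-/

open Finset

noncomputable section

/-- A vector `v ∈ ℝ^d` is `m`-sparse if its support has at most `m` elements. -/
def msparse {d : ℕ} (m : ℕ) (v : EuclideanSpace ℝ (Fin d)) : Prop :=
  (Finset.univ.filter fun i => v i ≠ 0).card ≤ m

/-- The Restricted Isometry Condition with parameters `(m, ε)`. -/
def RIC {N d : ℕ} (Φ : Matrix (Fin N) (Fin d) ℝ) (m : ℕ) (ε : ℝ) : Prop :=
  ∀ v : EuclideanSpace ℝ (Fin d), msparse m v →
    (1 - ε) * ‖v‖ ≤ ‖Matrix.toEuclideanLin Φ v‖ ∧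
    ‖Matrix.toEuclideanLin Φ v‖ ≤ (1 + ε) * ‖v‖

/-- The support of a vector, as a `Finset`. -/
def suppF {d : ℕ} (v : EuclideanSpace ℝ (Fin d)) : Finset (Fin d) :=
  Finset.univ.filter fun i => v i ≠ 0

/-- `restr S w = w|_S`: the vector equal to `w` on `S` and zero elsewhere. -/
def restr {d : ℕ} (S : Finset (Fin d)) (w : EuclideanSpace ℝ (Fin d)) :
    EuclideanSpace ℝ (Fin d) :=
  WithLp.toLp 2 (fun i => if i ∈ S then w i else 0)

/-- `colSpan Φ S = range(Φ_S)`: the span of the columns of `Φ` indexed by `S`. -/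
def colSpan {N d : ℕ} (Φ : Matrix (Fin N) (Fin d) ℝ) (S : Finset (Fin d)) :
    Submodule ℝ (EuclideanSpace ℝ (Fin N)) :=
  Submodule.span ℝ ((fun j => (WithLp.toLp 2 (fun i => Φ i j) : EuclideanSpace ℝ (Fin N))) '' (S : Set (Fin d)))

open RealInnerProductSpace

theorem Finset.sum_le_sum_of_card_le_of_forall_notMem_le {ι M : Type*} [AddCommMonoid M]
    [LinearOrder M] [IsOrderedAddMonoid M] {f : ι → M} {s t : Finset ι}
    (hf : ∀ i ∈ s, 0 ≤ f i) (hcard : t.card ≤ s.card) (hs : ∀ i ∈ s, ∀ j ∉ s, f j ≤ f i) :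
    ∑ j ∈ t, f j ≤ ∑ i ∈ s, f i := by
  classical
  rcases s.eq_empty_or_nonempty with rfl | hne
  · simp [card_eq_zero.mp (Nat.le_zero.mp hcard)]
  obtain ⟨i₀, hi₀, hc⟩ := exists_mem_eq_inf' hne f
  set c := s.inf' hne f
  calc ∑ j ∈ t, f j = ∑ j ∈ t ∩ s, f j + ∑ j ∈ t \ s, f j := (sum_inter_add_sum_sdiff t s f).symm
    _ ≤ ∑ j ∈ t ∩ s, f j + #(t \ s) • c := by
      gcongr
      exact sum_le_card_nsmul _ _ _ fun j hj =>
        le_inf' hne _ fun i hi => hs i hi j (mem_sdiff.mp hj).2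
    _ ≤ ∑ i ∈ s ∩ t, f i + #(s \ t) • c := by
      rw [inter_comm]
      exact add_le_add_right
        (nsmul_le_nsmul_left (hc ▸ hf i₀ hi₀) (card_sdiff_le_card_sdiff_iff.mpr hcard)) _
    _ ≤ ∑ i ∈ s ∩ t, f i + ∑ i ∈ s \ t, f i := by
      gcongr
      exact card_nsmul_le_sum _ _ _ fun i hi => inf'_le _ (mem_sdiff.mp hi).1
    _ = ∑ i ∈ s, f i := sum_inter_add_sum_sdiff s t f

section Restriction

variable {d : ℕ}

lemma mem_suppF {w : EuclideanSpace ℝ (Fin d)} {i : Fin d} : i ∈ suppF w ↔ w i ≠ 0 := by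
  simp [suppF]

lemma msparse_iff_card_suppF_le {m : ℕ} {w : EuclideanSpace ℝ (Fin d)} :
    msparse m w ↔ (suppF w).card ≤ m := Iff.rfl

lemma suppF_sub_subset (w w' : EuclideanSpace ℝ (Fin d)) :
    suppF (w - w') ⊆ suppF w ∪ suppF w' := by
  intro i
  simp only [mem_suppF, mem_union, PiLp.sub_apply]
  contrapose!
  rintro ⟨h, h'⟩
  simp [h, h']

@[simp]
lemma restr_apply (S : Finset (Fin d)) (w : EuclideanSpace ℝ (Fin d)) (i : Fin d) :
    restr S w i = if i ∈ S then w i else 0 := rfl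

lemma suppF_restr_subset (S : Finset (Fin d)) (w : EuclideanSpace ℝ (Fin d)) :
    suppF (restr S w) ⊆ S := by
  intro i
  rw [mem_suppF, restr_apply]
  contrapose!
  intro h
  simp [h]

lemma restr_eq_self {S : Finset (Fin d)} {w : EuclideanSpace ℝ (Fin d)} (h : suppF w ⊆ S) :
    restr S w = w := by
  ext i
  rw [restr_apply]
  split_ifs with hi
  · rfl
  · exact not_not.mp fun hw => hi (h (mem_suppF.mpr (Ne.symm hw)))

lemma suppF_sub_restr (S : Finset (Fin d)) (w : EuclideanSpace ℝ (Fin d)) :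
    suppF (w - restr S w) = suppF w \ S := by
  ext i
  by_cases hi : i ∈ S <;> simp [mem_suppF, hi]

lemma restr_sub_of_disjoint {S : Finset (Fin d)} {w w' : EuclideanSpace ℝ (Fin d)}
    (h : Disjoint S (suppF w')) : restr S (w - w') = restr S w := by
  ext i
  simp only [restr_apply, PiLp.sub_apply]
  split_ifs with hi
  · have : w' i = 0 := not_not.mp fun hw => disjoint_left.mp h hi (mem_suppF.mpr hw)
    rw [this, sub_zero]
  · rfl

lemma norm_restr_sq (S : Finset (Fin d)) (w : EuclideanSpace ℝ (Fin d)) :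
    ‖restr S w‖ ^ 2 = ∑ i ∈ S, w i ^ 2 := by
  simp [EuclideanSpace.real_norm_sq_eq, ite_pow, sum_ite_mem]

lemma norm_restr_le (S : Finset (Fin d)) (w : EuclideanSpace ℝ (Fin d)) :
    ‖restr S w‖ ≤ ‖w‖ := by
  refine le_of_sq_le_sq ?_ (norm_nonneg w)
  rw [norm_restr_sq, EuclideanSpace.real_norm_sq_eq]
  exact sum_le_univ_sum_of_nonneg fun i => sq_nonneg (w i)

lemma inner_restr_left_of_suppF_subset {S : Finset (Fin d)} {w : EuclideanSpace ℝ (Fin d)}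
    (u : EuclideanSpace ℝ (Fin d)) (h : suppF w ⊆ S) : ⟪restr S u, w⟫ = ⟪u, w⟫ := by
  conv_rhs => rw [← restr_eq_self h]
  conv_lhs => rw [← restr_eq_self h]
  simp only [PiLp.inner_apply, restr_apply, RCLike.inner_apply, conj_trivial]
  refine sum_congr rfl fun i _ => ?_
  split_ifs <;> simp

end Restriction

section TopCoordinates

variable {d : ℕ}

lemma norm_restr_le_norm_restr_of_card_le {n : ℕ} {u : EuclideanSpace ℝ (Fin d)}
    {J T : Finset (Fin d)} (hJbig : ∀ i ∈ J, ∀ j ∉ J, |u j| ≤ |u i|)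
    (hJcard : J.card = min n (suppF u).card) (hT : T.card ≤ n) :
    ‖restr T u‖ ≤ ‖restr J u‖ := by
  have hsupp : ∑ i ∈ T ∩ suppF u, u i ^ 2 = ∑ i ∈ T, u i ^ 2 :=
    sum_subset inter_subset_left fun i hiT hi => by
      simp [not_not.mp fun h => hi (mem_inter.mpr ⟨hiT, mem_suppF.mpr h⟩)]
  have hcard : (T ∩ suppF u).card ≤ J.card := hJcard ▸
    le_min ((card_le_card inter_subset_left).trans hT) (card_le_card inter_subset_right)
  refine le_of_sq_le_sq ?_ (norm_nonneg _)
  rw [norm_restr_sq, norm_restr_sq, ← hsupp]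
  exact sum_le_sum_of_card_le_of_forall_notMem_le (fun i _ => sq_nonneg (u i)) hcard
    fun i hi j hj => sq_le_sq.mpr (hJbig i hi j hj)

end TopCoordinates

section ColumnSpan

variable {N d : ℕ}

lemma toEuclideanLin_restr (Φ : Matrix (Fin N) (Fin d) ℝ) (S : Finset (Fin d))
    (w : EuclideanSpace ℝ (Fin d)) :
    Matrix.toEuclideanLin Φ (restr S w) =
      ∑ j ∈ S, w j • (WithLp.toLp 2 (fun i => Φ i j) : EuclideanSpace ℝ (Fin N)) := by
  ext i
  simp [Matrix.toLpLin_apply, Matrix.mulVec, dotProduct, mul_comm]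

lemma mem_colSpan_iff {Φ : Matrix (Fin N) (Fin d) ℝ} {S : Finset (Fin d)}
    {y : EuclideanSpace ℝ (Fin N)} :
    y ∈ colSpan Φ S ↔ ∃ w, suppF w ⊆ S ∧ Matrix.toEuclideanLin Φ w = y := by
  rw [colSpan, Submodule.mem_span_image_finset_iff_exists_fun']
  constructor
  · rintro ⟨c, rfl⟩
    exact ⟨restr S (WithLp.toLp 2 c), suppF_restr_subset _ _, toEuclideanLin_restr _ _ _⟩
  · rintro ⟨w, hw, rfl⟩
    exact ⟨w, by rw [← toEuclideanLin_restr, restr_eq_self hw]⟩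

lemma inner_toEuclideanLin_transpose (Φ : Matrix (Fin N) (Fin d) ℝ)
    (r : EuclideanSpace ℝ (Fin N)) (w : EuclideanSpace ℝ (Fin d)) :
    ⟪Matrix.toEuclideanLin Φ.transpose r, w⟫ = ⟪r, Matrix.toEuclideanLin Φ w⟫ := by
  rw [← Matrix.conjTranspose_eq_transpose_of_trivial,
    Matrix.toEuclideanLin_conjTranspose_eq_adjoint, LinearMap.adjoint_inner_left]

end ColumnSpan

section Residual

variable {N d : ℕ} {Φ : Matrix (Fin N) (Fin d) ℝ} {I : Finset (Fin d)}
  {v : EuclideanSpace ℝ (Fin d)} {r : EuclideanSpace ℝ (Fin N)}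

lemma mul_norm_restr_sdiff_le_norm {m : ℕ} {ε : ℝ} (hε : ε ≤ 1) (hΦ : RIC Φ m ε)
    (hI : (suppF v ∪ I).card ≤ m) (hvr : Matrix.toEuclideanLin Φ v - r ∈ colSpan Φ I) :
    (1 - ε) * ‖restr (suppF v \ I) v‖ ≤ ‖r‖ := by
  obtain ⟨w, hwI, hw⟩ := mem_colSpan_iff.mp hvr
  have hr : r = Matrix.toEuclideanLin Φ (v - w) := by rw [map_sub, hw, sub_sub_cancel]
  have hsparse : msparse m (v - w) := msparse_iff_card_suppF_le.mpr <|
    (card_le_card ((suppF_sub_subset v w).trans (union_subset_union_right hwI))).trans hI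
  have hdisj : Disjoint (suppF v \ I) (suppF w) := disjoint_of_subset_right hwI sdiff_disjoint
  calc (1 - ε) * ‖restr (suppF v \ I) v‖ = (1 - ε) * ‖restr (suppF v \ I) (v - w)‖ := by
        rw [restr_sub_of_disjoint hdisj]
    _ ≤ (1 - ε) * ‖v - w‖ := mul_le_mul_of_nonneg_left (norm_restr_le _ _) (by linarith)
    _ ≤ ‖r‖ := hr ▸ (hΦ _ hsparse).1

lemma norm_sq_eq_inner_transpose_restr_sdiff (hr : r ∈ (colSpan Φ I)ᗮ)
    (hvr : Matrix.toEuclideanLin Φ v - r ∈ colSpan Φ I) :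
    ‖r‖ ^ 2 = ⟪Matrix.toEuclideanLin Φ.transpose r, restr (suppF v \ I) v⟫ := by
  have horth := (Submodule.mem_orthogonal' _ _).mp hr
  have hrest : Matrix.toEuclideanLin Φ v - Matrix.toEuclideanLin Φ (restr (suppF v \ I) v) ∈
      colSpan Φ I := by
    rw [← map_sub]
    exact mem_colSpan_iff.mpr
      ⟨_, by rw [suppF_sub_restr, sdiff_sdiff_right_self]; exact inter_subset_right, rfl⟩
  rw [inner_toEuclideanLin_transpose, ← real_inner_self_eq_norm_sq]
  calc ⟪r, r⟫ = ⟪r, Matrix.toEuclideanLin Φ v⟫ :=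
        (sub_eq_zero.mp ((inner_sub_right _ _ _).symm.trans (horth _ hvr))).symm
    _ = ⟪r, Matrix.toEuclideanLin Φ (restr (suppF v \ I) v)⟫ :=
        sub_eq_zero.mp ((inner_sub_right _ _ _).symm.trans (horth _ hrest))

end Residual

theorem localizing_the_energy_general {N d n : ℕ} (Φ : Matrix (Fin N) (Fin d) ℝ)
    (ε : ℝ) (hε' : ε ≤ 0.03) (hΦ : RIC Φ (2 * n) ε)
    (v : EuclideanSpace ℝ (Fin d)) (hv : msparse n v)
    (I : Finset (Fin d)) (hI : (suppF v ∪ I).card ≤ 2 * n)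
    (x r : EuclideanSpace ℝ (Fin N)) (v₀ u : EuclideanSpace ℝ (Fin d))
    (hx : x = Matrix.toEuclideanLin Φ v)
    (hr : r = (Submodule.orthogonalProjection (colSpan Φ I)ᗮ x : EuclideanSpace ℝ (Fin N)))
    (hv₀ : v₀ = restr (suppF v \ I) v)
    (hu : u = Matrix.toEuclideanLin Φ.transpose r)
    (J : Finset (Fin d))
    (hJbig : ∀ i ∈ J, ∀ j ∉ J, |u j| ≤ |u i|)
    (hJcard : J.card = min n (suppF u).card) :
    0.8 * ‖v₀‖ ≤ ‖restr J u‖ := by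
  have hrF : r ∈ (colSpan Φ I)ᗮ := hr ▸ Submodule.coe_mem _
  have hxr : Matrix.toEuclideanLin Φ v - r ∈ colSpan Φ I := by simp [hr, hx]
  have hT : (suppF v \ I).card ≤ n :=
    (card_le_card sdiff_subset).trans (msparse_iff_card_suppF_le.mp hv)
  have hlower : (1 - ε) * ‖v₀‖ ≤ ‖r‖ :=
    hv₀ ▸ mul_norm_restr_sdiff_le_norm (by linarith) hΦ hI hxr
  have hupper : ‖r‖ ^ 2 ≤ ‖restr J u‖ * ‖v₀‖ :=
    calc ‖r‖ ^ 2 = ⟪restr (suppF v \ I) u, v₀⟫ := by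
          rw [inner_restr_left_of_suppF_subset u (hv₀ ▸ suppF_restr_subset _ _), hu, hv₀]
          exact norm_sq_eq_inner_transpose_restr_sdiff hrF hxr
      _ ≤ ‖restr (suppF v \ I) u‖ * ‖v₀‖ := real_inner_le_norm _ _
      _ ≤ ‖restr J u‖ * ‖v₀‖ := by
          gcongr; exact norm_restr_le_norm_restr_of_card_le hJbig hJcard hT
  rcases (norm_nonneg v₀).eq_or_lt with h0 | h0
  · rw [← h0, mul_zero]
    exact norm_nonneg _
  · refine le_of_mul_le_mul_right ?_ h0
    calc 0.8 * ‖v₀‖ * ‖v₀‖ ≤ (1 - ε) ^ 2 * ‖v₀‖ ^ 2 := by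
          rw [mul_assoc, ← sq]; gcongr; nlinarith
      _ = ((1 - ε) * ‖v₀‖) ^ 2 := (mul_pow _ _ 2).symm
      _ ≤ ‖r‖ ^ 2 := pow_le_pow_left₀ (mul_nonneg (by linarith) h0.le) hlower 2
      _ ≤ ‖restr J u‖ * ‖v₀‖ := hupper

/-- Localizing the energy: under RIC with parameters `(2n, ε)`, `0 < ε ≤ 0.03`, with
`x = Φv`, `F = range(Φ_I)`, `r = P_{F^⊥} x`, `v₀ = v|_{supp(v)∖I}`, `u = Φ*r`, and `J`
a set of `min(n, |supp(u)|)` biggest coordinates of `u`, one has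
`‖u|_J‖₂ ≥ 0.8 ‖v₀‖₂`. -/
theorem localizing_the_energy {N d n : ℕ} (Φ : Matrix (Fin N) (Fin d) ℝ)
    (ε : ℝ) (hε : 0 < ε) (hε' : ε ≤ 0.03) (hΦ : RIC Φ (2 * n) ε)
    (v : EuclideanSpace ℝ (Fin d)) (hv : msparse n v)
    (I : Finset (Fin d)) (hI : (suppF v ∪ I).card ≤ 2 * n)
    (x r : EuclideanSpace ℝ (Fin N)) (v₀ u : EuclideanSpace ℝ (Fin d))
    (hx : x = Matrix.toEuclideanLin Φ v)
    (hr : r = (Submodule.orthogonalProjection (colSpan Φ I)ᗮ x : EuclideanSpace ℝ (Fin N)))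
    (hv₀ : v₀ = restr (suppF v \ I) v)
    (hu : u = Matrix.toEuclideanLin Φ.transpose r)
    (J : Finset (Fin d)) (hJsupp : J ⊆ suppF u)
    (hJbig : ∀ i ∈ J, ∀ j ∉ J, |u j| ≤ |u i|)
    (hJcard : J.card = min n (suppF u).card) :
    0.8 * ‖v₀‖ ≤ ‖restr J u‖ :=
  localizing_the_energy_general Φ ε hε' hΦ v hv I hI x r v₀ u hx hr hv₀ hu J hJbig hJcard
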